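/- arXiv:2011.08569 — 4 statements merged into one kernel-verified Lean document; each statement's English description precedes it below -/
import Mathlib

section
/- Let ρ > 0, let each g_i : ℝⁿ → ℝ be differentiable with ‖∇g_i(x) − ∇g_i(y)‖ ≤ L_{gi}‖x − y‖ and ‖∇g_i(x)‖ ≤ B_{gi} for all x, y ∈ ℝⁿ, and let (x*, λ*) ∈ ℝⁿ × ℝ^m satisfy λ* ≥ 0, g(x*) ≤ 0 and λ_i* g_i(x*) = 0 for all i (so that [ρ g_i(x*) + λ_i*]_+ = λ_i*). Then for all x ∈ ℝⁿ and λ ∈ ℝ^m, ‖∇_x U_ρ(x,λ) − ∇_x U_ρ(x*,λ*)‖ ≤ θ₁ ‖x − x*‖ + B_g ‖λ − λ*‖, where ∇_x U_ρ(x,λ) = Σ_{i=1}^m [ρ g_i(x)+λ_i]_+ ∇g_i(x), B_g = sqrt(Σ_i B_{gi}²), L_g = sqrt(Σ_i L_{gi}²), and θ₁ = ρ B_g² + L_g ‖λ*‖. -/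
/-!
At a KKT point complementary slackness gives `[ρ g_i(x*) + λ*_i]_+ = λ*_i`. Splitting
`aᵢ vᵢ - a*ᵢ v*ᵢ = (aᵢ - a*ᵢ) vᵢ + a*ᵢ (vᵢ - v*ᵢ)`, the first part is controlled by the
`1`-Lipschitz positive part together with the mean value theorem for `gᵢ` (slope `B_{gi}`), the
second by the Lipschitz gradients; Cauchy–Schwarz then collects the termwise bounds into
`B_g`, `L_g`, `‖λ - λ*‖` and `‖λ*‖`.
-/

open Finset

lemma abs_sub_le_of_hasGradientAt_of_norm_le {E : Type*} [NormedAddCommGroup E]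
    [InnerProductSpace ℝ E] [CompleteSpace E] {f : E → ℝ} {f' : E → E} {C : ℝ}
    (hf : ∀ x, HasGradientAt f (f' x) x) (hC : ∀ x, ‖f' x‖ ≤ C) (x y : E) :
    |f x - f y| ≤ C * ‖x - y‖ := by
  simpa [Real.norm_eq_abs] using convex_univ.norm_image_sub_le_of_norm_hasFDerivWithin_le
    (fun z _ => (hf z).hasFDerivAt.hasFDerivWithinAt) (fun z _ => by simpa using hC z)
    (Set.mem_univ y) (Set.mem_univ x)

lemma max_mul_add_zero_eq_of_complementary {ρ c l : ℝ} (hρ : 0 ≤ ρ) (hl : 0 ≤ l)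
    (hc : c ≤ 0) (hlc : l * c = 0) : max (ρ * c + l) 0 = l := by
  rcases mul_eq_zero.mp hlc with rfl | rfl
  · simpa using mul_nonpos_of_nonneg_of_nonpos hρ hc
  · simpa using hl

lemma abs_max_mul_add_sub_max_mul_add_le {ρ : ℝ} (hρ : 0 ≤ ρ) (a b l l' : ℝ) :
    |max (ρ * a + l) 0 - max (ρ * b + l') 0| ≤ ρ * |a - b| + |l - l'| :=
  calc |max (ρ * a + l) 0 - max (ρ * b + l') 0|
      ≤ |(ρ * a + l) - (ρ * b + l')| := abs_max_sub_max_le_abs _ _ _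
    _ = |ρ * (a - b) + (l - l')| := by ring_nf
    _ ≤ |ρ * (a - b)| + |l - l'| := abs_add_le _ _
    _ = ρ * |a - b| + |l - l'| := by rw [abs_mul, abs_of_nonneg hρ]

lemma norm_sum_smul_sub_sum_smul_le {ι F : Type*} [NormedAddCommGroup F] [NormedSpace ℝ F]
    (s : Finset ι) (a b : ι → ℝ) (v w : ι → F) :
    ‖∑ i ∈ s, a i • v i - ∑ i ∈ s, b i • w i‖ ≤
      ∑ i ∈ s, |a i - b i| * ‖v i‖ + ∑ i ∈ s, |b i| * ‖v i - w i‖ := by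
  have hsplit : ∑ i ∈ s, a i • v i - ∑ i ∈ s, b i • w i =
      ∑ i ∈ s, (a i - b i) • v i + ∑ i ∈ s, b i • (v i - w i) := by
    simp only [← sum_sub_distrib, ← sum_add_distrib, sub_smul, smul_sub]
    exact sum_congr rfl fun i _ => by abel
  rw [hsplit]
  refine (norm_add_le _ _).trans (add_le_add ?_ ?_) <;>
    refine (norm_sum_le _ _).trans (sum_le_sum fun i _ => ?_) <;>
    rw [norm_smul, Real.norm_eq_abs]

lemma EuclideanSpace.sum_abs_mul_le_norm_mul_sqrt {m : ℕ} (v : EuclideanSpace ℝ (Fin m))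
    (w : Fin m → ℝ) : ∑ i, |v i| * w i ≤ ‖v‖ * √(∑ i, w i ^ 2) := by
  simpa [EuclideanSpace.norm_eq] using Real.sum_mul_le_sqrt_mul_sqrt univ (fun i => |v i|) w

/-- Lipschitz-type bound for the `x`-gradient of the augmented penalty:
`‖∇ₓU_ρ(x,λ) − ∇ₓU_ρ(x*,λ*)‖ ≤ θ₁‖x − x*‖ + B_g‖λ − λ*‖` where
`θ₁ = ρ B_g² + L_g‖λ*‖`, at a point `(x*,λ*)` satisfying `λ* ≥ 0`, `g(x*) ≤ 0`
and complementary slackness. -/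
theorem augmented_penalty_gradient_x_bound {n m : ℕ} (ρ : ℝ) (hρ : 0 < ρ)
    (g : Fin m → EuclideanSpace ℝ (Fin n) → ℝ)
    (g' : Fin m → EuclideanSpace ℝ (Fin n) → EuclideanSpace ℝ (Fin n))
    (L B : Fin m → ℝ)
    (hg : ∀ i x, HasGradientAt (g i) (g' i x) x)
    (hgL : ∀ i x y, ‖g' i x - g' i y‖ ≤ L i * ‖x - y‖)
    (hgB : ∀ i x, ‖g' i x‖ ≤ B i)
    (xs : EuclideanSpace ℝ (Fin n)) (ls : EuclideanSpace ℝ (Fin m))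
    (hls : ∀ i, 0 ≤ ls i) (hgs : ∀ i, g i xs ≤ 0) (hcomp : ∀ i, ls i * g i xs = 0)
    (Bg Lg θ₁ : ℝ)
    (hBg : Bg = Real.sqrt (∑ i, (B i) ^ 2)) (hLg : Lg = Real.sqrt (∑ i, (L i) ^ 2))
    (hθ₁ : θ₁ = ρ * Bg ^ 2 + Lg * ‖ls‖) :
    ∀ (x : EuclideanSpace ℝ (Fin n)) (lam : EuclideanSpace ℝ (Fin m)),
      ‖(∑ i, max (ρ * g i x + lam i) 0 • g' i x) -
          ∑ i, max (ρ * g i xs + ls i) 0 • g' i xs‖ ≤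
        θ₁ * ‖x - xs‖ + Bg * ‖lam - ls‖ := by
  intro x lam
  have hcoef : ∀ i, |max (ρ * g i x + lam i) 0 - max (ρ * g i xs + ls i) 0| ≤
      ρ * ‖x - xs‖ * B i + |(lam - ls) i| := fun i =>
    calc _ ≤ ρ * |g i x - g i xs| + |lam i - ls i| :=
          abs_max_mul_add_sub_max_mul_add_le hρ.le _ _ _ _
      _ ≤ ρ * (B i * ‖x - xs‖) + |lam i - ls i| := by
          gcongr; exact abs_sub_le_of_hasGradientAt_of_norm_le (hg i) (hgB i) x xs
      _ = ρ * ‖x - xs‖ * B i + |(lam - ls) i| := by simp only [PiLp.sub_apply]; ring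
  have hBg2 : ∑ i, B i ^ 2 = Bg ^ 2 := by rw [hBg, Real.sq_sqrt (by positivity)]
  simp only [max_mul_add_zero_eq_of_complementary hρ.le (hls _) (hgs _) (hcomp _)] at hcoef ⊢
  calc _ ≤ ∑ i, |max (ρ * g i x + lam i) 0 - ls i| * ‖g' i x‖ +
          ∑ i, |ls i| * ‖g' i x - g' i xs‖ := norm_sum_smul_sub_sum_smul_le _ _ _ _ _
    _ ≤ ∑ i, (ρ * ‖x - xs‖ * B i + |(lam - ls) i|) * B i + ∑ i, |ls i| * (L i * ‖x - xs‖) := by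
        gcongr with i _ i _
        · exact (abs_nonneg _).trans (hcoef i)
        · exact hcoef i
        · exact hgB i x
        · exact hgL i x xs
    _ = ρ * ‖x - xs‖ * ∑ i, B i ^ 2 + ∑ i, |(lam - ls) i| * B i +
          (∑ i, |ls i| * L i) * ‖x - xs‖ := by
        simp only [add_mul, sum_add_distrib, mul_sum, sum_mul]
        ring_nf
    _ ≤ ρ * ‖x - xs‖ * Bg ^ 2 + ‖lam - ls‖ * Bg + ‖ls‖ * Lg * ‖x - xs‖ := by
        rw [hBg2, hBg, hLg]
        gcongr <;> exact EuclideanSpace.sum_abs_mul_le_norm_mul_sqrt _ _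
    _ = θ₁ * ‖x - xs‖ + Bg * ‖lam - ls‖ := by rw [hθ₁]; ring
end

section
/- Let ρ > 0, let f : ℝⁿ → ℝ be differentiable and l-smooth (‖∇f(x) − ∇f(y)‖ ≤ l‖x − y‖ for all x,y), let each g_i : ℝⁿ → ℝ be differentiable with ‖∇g_i(x) − ∇g_i(y)‖ ≤ L_{gi}‖x − y‖ and ‖∇g_i(x)‖ ≤ B_{gi} for all x, y, and let (x*, λ*) satisfy λ* ≥ 0, g(x*) ≤ 0 and λ_i* g_i(x*) = 0 for all i. Let ∇_x L(x,λ) = ∇f(x) + Σ_{i=1}^m [ρ g_i(x)+λ_i]_+ ∇g_i(x). Then for all x ∈ ℝⁿ and λ ∈ ℝ^m, ‖∇_x L(x,λ) − ∇_x L(x*,λ*)‖² ≤ (2l² + 4θ₁²)‖x − x*‖² + 4B_g²‖λ − λ*‖², where B_g = sqrt(Σ_i B_{gi}²), L_g = sqrt(Σ_i L_{gi}²), and θ₁ = ρ B_g² + L_g ‖λ*‖. -/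
/-!
At a KKT point the multiplier is unchanged by the shift: `[ρ g_i(x*) + λ*_i]_+ = λ*_i`.
Hence the `i`-th constraint term of `∇ₓL(x,λ) − ∇ₓL(x*,λ*)` splits as
`(a_i − λ*_i) ∇g_i(x) + λ*_i (∇g_i(x) − ∇g_i(x*))`, where `a_i = [ρ g_i(x) + λ_i]_+`.
Since `[·]_+` is 1-Lipschitz and `g_i` is `B_{gi}`-Lipschitz,
`|a_i − λ*_i| ≤ ρ B_{gi} ‖x − x*‖ + |λ_i − λ*_i|`. Summing and applying Cauchy–Schwarz gives
`‖∇ₓL(x,λ) − ∇ₓL(x*,λ*)‖ ≤ (l + θ₁)‖x − x*‖ + B_g ‖λ − λ*‖`, and squaring with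
`(a + b + c)² ≤ 2a² + 4b² + 4c²` finishes the proof.
-/

open Finset InnerProductSpace

lemma norm_sub_le_of_hasGradientAt_of_norm_le {F : Type*} [NormedAddCommGroup F]
    [InnerProductSpace ℝ F] [CompleteSpace F] {φ : F → ℝ} {φ' : F → F} {C : ℝ}
    (hφ : ∀ x, HasGradientAt φ (φ' x) x) (hC : ∀ x, ‖φ' x‖ ≤ C) (x y : F) :
    ‖φ x - φ y‖ ≤ C * ‖x - y‖ :=
  convex_univ.norm_image_sub_le_of_norm_hasFDerivWithin_le (f' := fun z => toDual ℝ F (φ' z))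
    (fun z _ => (hasGradientAt_iff_hasFDerivAt.mp (hφ z)).hasFDerivWithinAt)
    (fun z _ => by simpa using hC z) (Set.mem_univ y) (Set.mem_univ x)

lemma sum_mul_abs_le_sqrt_mul_norm {ι : Type*} [Fintype ι] (B : ι → ℝ) (w : EuclideanSpace ℝ ι) :
    ∑ i, B i * |w i| ≤ √(∑ i, B i ^ 2) * ‖w‖ := by
  have hw : ‖w‖ = √(∑ i, |w i| ^ 2) := by simp [EuclideanSpace.norm_eq]
  rw [hw]
  exact Real.sum_mul_le_sqrt_mul_sqrt _ _ _

lemma norm_smul_sub_smul_le {E : Type*} [SeminormedAddCommGroup E] [NormedSpace ℝ E]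
    (a b : ℝ) (u v : E) : ‖a • u - b • v‖ ≤ |a - b| * ‖u‖ + |b| * ‖u - v‖ := by
  have hsplit : a • u - b • v = (a - b) • u + b • (u - v) := by
    rw [sub_smul, smul_sub]; abel
  rw [hsplit, ← Real.norm_eq_abs, ← Real.norm_eq_abs, ← norm_smul, ← norm_smul]
  exact norm_add_le _ _

lemma max_mul_add_zero_eq_of_complementarity {ρ c μ : ℝ} (hρ : 0 ≤ ρ) (hμ : 0 ≤ μ)
    (hc : c ≤ 0) (hcomp : μ * c = 0) : max (ρ * c + μ) 0 = μ := by
  rcases mul_eq_zero.mp hcomp with rfl | rfl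
  · exact max_eq_right (by nlinarith)
  · simpa using hμ

lemma abs_max_mul_add_zero_sub_le {ρ : ℝ} (hρ : 0 ≤ ρ) (c c' μ μ' : ℝ) :
    |max (ρ * c + μ) 0 - max (ρ * c' + μ') 0| ≤ ρ * |c - c'| + |μ - μ'| :=
  calc |max (ρ * c + μ) 0 - max (ρ * c' + μ') 0|
      ≤ |ρ * (c - c') + (μ - μ')| :=
        (abs_max_sub_max_le_abs _ _ 0).trans_eq (congrArg _ (by ring))
    _ ≤ ρ * |c - c'| + |μ - μ'| := by
        simpa [abs_mul, abs_of_nonneg hρ] using abs_add_le (ρ * (c - c')) (μ - μ')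

lemma sum_norm_smul_sub_smul_le {ι E : Type*} [Fintype ι] [SeminormedAddCommGroup E]
    [NormedSpace ℝ E] {ρ d : ℝ} (hd : 0 ≤ d) (a L B : ι → ℝ) (u v : ι → E)
    (μ μ' : EuclideanSpace ℝ ι) (hu : ∀ i, ‖u i‖ ≤ B i)
    (huv : ∀ i, ‖u i - v i‖ ≤ L i * d) (ha : ∀ i, |a i - μ' i| ≤ ρ * B i * d + |μ i - μ' i|) :
    ∑ i, ‖a i • u i - μ' i • v i‖ ≤
      (ρ * √(∑ i, B i ^ 2) ^ 2 + √(∑ i, L i ^ 2) * ‖μ'‖) * d + √(∑ i, B i ^ 2) * ‖μ - μ'‖ := by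
  have hB : ∀ i, 0 ≤ B i := fun i => (norm_nonneg _).trans (hu i)
  have hterm : ∀ i, ‖a i • u i - μ' i • v i‖ ≤
      ρ * d * B i ^ 2 + B i * |(μ - μ') i| + d * (L i * |μ' i|) := fun i =>
    calc ‖a i • u i - μ' i • v i‖ ≤ |a i - μ' i| * ‖u i‖ + |μ' i| * ‖u i - v i‖ :=
          norm_smul_sub_smul_le _ _ _ _
      _ ≤ (ρ * B i * d + |μ i - μ' i|) * B i + |μ' i| * (L i * d) := by
          gcongr
          · exact (abs_nonneg _).trans (ha i)
          · exact ha i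
          · exact hu i
          · exact huv i
      _ = ρ * d * B i ^ 2 + B i * |(μ - μ') i| + d * (L i * |μ' i|) := by
          rw [PiLp.sub_apply]; ring
  calc ∑ i, ‖a i • u i - μ' i • v i‖
      ≤ ρ * d * ∑ i, B i ^ 2 + ∑ i, B i * |(μ - μ') i| + d * ∑ i, L i * |μ' i| := by
        simpa only [sum_add_distrib, mul_sum] using sum_le_sum fun i _ => hterm i
    _ ≤ ρ * d * √(∑ i, B i ^ 2) ^ 2 + √(∑ i, B i ^ 2) * ‖μ - μ'‖
          + d * (√(∑ i, L i ^ 2) * ‖μ'‖) := by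
        rw [Real.sq_sqrt (sum_nonneg fun i _ => sq_nonneg (B i))]
        gcongr <;> exact sum_mul_abs_le_sqrt_mul_norm _ _
    _ = _ := by ring

lemma sq_le_of_le_add_add {N a b c : ℝ} (hN : 0 ≤ N) (h : N ≤ a + b + c) :
    N ^ 2 ≤ 2 * a ^ 2 + 4 * b ^ 2 + 4 * c ^ 2 := by
  nlinarith [sq_nonneg (a - b - c), sq_nonneg (b - c)]

theorem augmented_lagrangian_gradient_x_sq_bound_general {n m : ℕ} (ρ : ℝ) (hρ : 0 < ρ)
    (f' : EuclideanSpace ℝ (Fin n) → EuclideanSpace ℝ (Fin n)) (l : ℝ)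
    (hfl : ∀ x y, ‖f' x - f' y‖ ≤ l * ‖x - y‖)
    (g : Fin m → EuclideanSpace ℝ (Fin n) → ℝ)
    (g' : Fin m → EuclideanSpace ℝ (Fin n) → EuclideanSpace ℝ (Fin n))
    (L B : Fin m → ℝ)
    (hg : ∀ i x, HasGradientAt (g i) (g' i x) x)
    (hgL : ∀ i x y, ‖g' i x - g' i y‖ ≤ L i * ‖x - y‖)
    (hgB : ∀ i x, ‖g' i x‖ ≤ B i)
    (xs : EuclideanSpace ℝ (Fin n)) (ls : EuclideanSpace ℝ (Fin m))
    (hls : ∀ i, 0 ≤ ls i) (hgs : ∀ i, g i xs ≤ 0) (hcomp : ∀ i, ls i * g i xs = 0)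
    (Bg Lg θ₁ : ℝ)
    (hBg : Bg = Real.sqrt (∑ i, (B i) ^ 2)) (hLg : Lg = Real.sqrt (∑ i, (L i) ^ 2))
    (hθ₁ : θ₁ = ρ * Bg ^ 2 + Lg * ‖ls‖) :
    ∀ (x : EuclideanSpace ℝ (Fin n)) (lam : EuclideanSpace ℝ (Fin m)),
      ‖(f' x + ∑ i, max (ρ * g i x + lam i) 0 • g' i x) -
          (f' xs + ∑ i, max (ρ * g i xs + ls i) 0 • g' i xs)‖ ^ 2 ≤
        (2 * l ^ 2 + 4 * θ₁ ^ 2) * ‖x - xs‖ ^ 2 + 4 * Bg ^ 2 * ‖lam - ls‖ ^ 2 := by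
  intro x lam
  set a : Fin m → ℝ := fun i => max (ρ * g i x + lam i) 0
  have hkkt : ∀ i, max (ρ * g i xs + ls i) 0 = ls i := fun i =>
    max_mul_add_zero_eq_of_complementarity hρ.le (hls i) (hgs i) (hcomp i)
  have ha : ∀ i, |a i - ls i| ≤ ρ * B i * ‖x - xs‖ + |lam i - ls i| := fun i => by
    have hmax := abs_max_mul_add_zero_sub_le hρ.le (g i x) (g i xs) (lam i) (ls i)
    rw [hkkt i] at hmax
    refine hmax.trans ?_
    rw [mul_assoc]
    gcongr
    exact norm_sub_le_of_hasGradientAt_of_norm_le (hg i) (hgB i) x xs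
  have hsum := sum_norm_smul_sub_smul_le (norm_nonneg (x - xs)) a L B
    (fun i => g' i x) (fun i => g' i xs) lam ls (fun i => hgB i x) (fun i => hgL i x xs) ha
  rw [← hBg, ← hLg, ← hθ₁] at hsum
  have hnorm : ‖(f' x + ∑ i, a i • g' i x) - (f' xs + ∑ i, ls i • g' i xs)‖ ≤
      l * ‖x - xs‖ + θ₁ * ‖x - xs‖ + Bg * ‖lam - ls‖ :=
    calc _ = ‖(f' x - f' xs) + ∑ i, (a i • g' i x - ls i • g' i xs)‖ := by
          rw [sum_sub_distrib]; abel_nf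
      _ ≤ ‖f' x - f' xs‖ + ∑ i, ‖a i • g' i x - ls i • g' i xs‖ :=
          (norm_add_le _ _).trans (by gcongr; exact norm_sum_le _ _)
      _ ≤ _ := by linarith [hfl x xs]
  simp only [hkkt]
  linarith [sq_le_of_le_add_add (norm_nonneg _) hnorm]

/-- Bound on the squared difference of `x`-gradients of the augmented Lagrangian:
`‖∇ₓL(x,λ) − ∇ₓL(x*,λ*)‖² ≤ (2l² + 4θ₁²)‖x − x*‖² + 4B_g²‖λ − λ*‖²`. -/
theorem augmented_lagrangian_gradient_x_sq_bound {n m : ℕ} (ρ : ℝ) (hρ : 0 < ρ)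
    (f : EuclideanSpace ℝ (Fin n) → ℝ)
    (f' : EuclideanSpace ℝ (Fin n) → EuclideanSpace ℝ (Fin n)) (l : ℝ)
    (hf : ∀ x, HasGradientAt f (f' x) x)
    (hfl : ∀ x y, ‖f' x - f' y‖ ≤ l * ‖x - y‖)
    (g : Fin m → EuclideanSpace ℝ (Fin n) → ℝ)
    (g' : Fin m → EuclideanSpace ℝ (Fin n) → EuclideanSpace ℝ (Fin n))
    (L B : Fin m → ℝ)
    (hg : ∀ i x, HasGradientAt (g i) (g' i x) x)
    (hgL : ∀ i x y, ‖g' i x - g' i y‖ ≤ L i * ‖x - y‖)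
    (hgB : ∀ i x, ‖g' i x‖ ≤ B i)
    (xs : EuclideanSpace ℝ (Fin n)) (ls : EuclideanSpace ℝ (Fin m))
    (hls : ∀ i, 0 ≤ ls i) (hgs : ∀ i, g i xs ≤ 0) (hcomp : ∀ i, ls i * g i xs = 0)
    (Bg Lg θ₁ : ℝ)
    (hBg : Bg = Real.sqrt (∑ i, (B i) ^ 2)) (hLg : Lg = Real.sqrt (∑ i, (L i) ^ 2))
    (hθ₁ : θ₁ = ρ * Bg ^ 2 + Lg * ‖ls‖) :
    ∀ (x : EuclideanSpace ℝ (Fin n)) (lam : EuclideanSpace ℝ (Fin m)),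
      ‖(f' x + ∑ i, max (ρ * g i x + lam i) 0 • g' i x) -
          (f' xs + ∑ i, max (ρ * g i xs + ls i) 0 • g' i xs)‖ ^ 2 ≤
        (2 * l ^ 2 + 4 * θ₁ ^ 2) * ‖x - xs‖ ^ 2 + 4 * Bg ^ 2 * ‖lam - ls‖ ^ 2 :=
  augmented_lagrangian_gradient_x_sq_bound_general ρ hρ f' l hfl g g' L B hg hgL hgB xs ls hls hgs
    hcomp Bg Lg θ₁ hBg hLg hθ₁
end

section
/- Let ρ > 0, let f : ℝⁿ → ℝ be differentiable with quadratic gradient growth at x* with parameter μ > 0 (i.e. ⟨∇f(x) − ∇f(x*), x − x*⟩ ≥ μ‖x − x*‖² for all x ∈ ℝⁿ), let each g_i be convex and differentiable, and let λ, λ* ∈ ℝ^m with λ ≥ 0 and λ* ≥ 0 componentwise. Then for all x ∈ ℝⁿ, ⟨∇_x L(x,λ) − ∇_x L(x*,λ*), x − x*⟩ ≥ μ‖x − x*‖² + (U_ρ(x,λ) − U_ρ(x*,λ)) + (U_ρ(x*,λ*) − U_ρ(x,λ*)), where ∇_x L(x,λ) = ∇f(x) + Σ_{i=1}^m [ρ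 g_i(x)+λ_i]_+ ∇g_i(x) and U_ρ(x,λ) = Σ_{i=1}^m ([ρ g_i(x)+λ_i]_+² − λ_i²)/(2ρ). -/
open scoped RealInnerProductSpace

/-!
The summand `h(t) = ([ρ t + λᵢ]₊² − λᵢ²) / (2ρ)` of `U_ρ` satisfies the tangent inequality
`h(s) + [ρ s + λᵢ]₊ (t − s) ≤ h(t)`. Since `[·]₊ ≥ 0`, combining it with the first-order convexity
inequality for `gᵢ` gives `[ρ gᵢ(x) + λᵢ]₊ ⟪∇gᵢ(x), y − x⟫ ≤ h(gᵢ(y)) − h(gᵢ(x))`. Used at `x` with `λ`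
and at `x*` with `λ*`, this bounds the two penalty parts of the inner product by the two differences
of `U_ρ`, and quadratic gradient growth bounds the `f` part.
-/

theorem ConvexOn.add_apply_sub_le_of_hasFDerivAt {E : Type*} [NormedAddCommGroup E]
    [NormedSpace ℝ E] {S : Set E} {f : E → ℝ} {f' : E →L[ℝ] ℝ} {x y : E}
    (hf : ConvexOn ℝ S f) (hx : x ∈ S) (hy : y ∈ S) (hf' : HasFDerivAt f f' x) :
    f x + f' (y - x) ≤ f y := by
  have hderiv : HasDerivAt (f ∘ AffineMap.lineMap (k := ℝ) x y) (f' (y - x)) 0 := by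
    refine HasFDerivAt.comp_hasDerivAt (0 : ℝ) ?_ AffineMap.hasDerivAt_lineMap
    simpa using hf'
  have hslope := (hf.comp_affineMap (AffineMap.lineMap (k := ℝ) x y)).le_slope_of_hasDerivAt
    (x := 0) (y := 1) (by simpa) (by simpa) one_pos hderiv
  simp only [slope_def_field, Function.comp_apply, AffineMap.lineMap_apply_zero,
    AffineMap.lineMap_apply_one, sub_zero, div_one] at hslope
  linarith

theorem ConvexOn.add_inner_sub_le_of_hasGradientAt {F : Type*} [NormedAddCommGroup F]
    [InnerProductSpace ℝ F] [CompleteSpace F] {S : Set F} {f : F → ℝ} {v x y : F}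
    (hf : ConvexOn ℝ S f) (hx : x ∈ S) (hy : y ∈ S) (hv : HasGradientAt f v x) :
    f x + ⟪v, y - x⟫ ≤ f y := by
  simpa using hf.add_apply_sub_le_of_hasFDerivAt hx hy hv.hasFDerivAt

theorem two_mul_max_zero_mul_sub_le_sq_sub_sq (s t : ℝ) :
    2 * max s 0 * (t - s) ≤ max t 0 ^ 2 - max s 0 ^ 2 := by
  rcases le_or_gt s 0 with hs | hs
  · rw [max_eq_right hs]
    nlinarith [sq_nonneg (max t 0)]
  · rw [max_eq_left hs.le]
    nlinarith [le_max_left t 0, le_max_right t 0, sq_nonneg (max t 0 - s)]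

/-- The `i`-th summand of `U_ρ(x, λ)`, as a function of `λ = λᵢ` and `t = gᵢ(x)`. -/
noncomputable def augmentedPenalty (ρ lam t : ℝ) : ℝ :=
  (max (ρ * t + lam) 0 ^ 2 - lam ^ 2) / (2 * ρ)

theorem max_zero_mul_sub_le_augmentedPenalty_sub {ρ : ℝ} (hρ : 0 < ρ) (lam s t : ℝ) :
    max (ρ * s + lam) 0 * (t - s) ≤ augmentedPenalty ρ lam t - augmentedPenalty ρ lam s := by
  have h := two_mul_max_zero_mul_sub_le_sq_sub_sq (ρ * s + lam) (ρ * t + lam)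
  rw [augmentedPenalty, augmentedPenalty, div_sub_div_same, le_div_iff₀ (by positivity)]
  nlinarith

theorem ConvexOn.max_zero_mul_inner_le_augmentedPenalty_sub {F : Type*} [NormedAddCommGroup F]
    [InnerProductSpace ℝ F] [CompleteSpace F] {S : Set F} {g : F → ℝ} {v x y : F} {ρ : ℝ}
    (hρ : 0 < ρ) (lam : ℝ) (hg : ConvexOn ℝ S g) (hx : x ∈ S) (hy : y ∈ S)
    (hv : HasGradientAt g v x) :
    max (ρ * g x + lam) 0 * ⟪v, y - x⟫ ≤
      augmentedPenalty ρ lam (g y) - augmentedPenalty ρ lam (g x) :=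
  calc max (ρ * g x + lam) 0 * ⟪v, y - x⟫
      ≤ max (ρ * g x + lam) 0 * (g y - g x) := by
        gcongr
        linarith [hg.add_inner_sub_le_of_hasGradientAt hx hy hv]
    _ ≤ augmentedPenalty ρ lam (g y) - augmentedPenalty ρ lam (g x) :=
        max_zero_mul_sub_le_augmentedPenalty_sub hρ lam (g x) (g y)

theorem augmented_lagrangian_gradient_monotone_general {n m : ℕ} (ρ : ℝ) (hρ : 0 < ρ)
    (f' : EuclideanSpace ℝ (Fin n) → EuclideanSpace ℝ (Fin n)) (μ : ℝ)
    (xs : EuclideanSpace ℝ (Fin n))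
    (hqg : ∀ x : EuclideanSpace ℝ (Fin n), μ * ‖x - xs‖ ^ 2 ≤ ⟪f' x - f' xs, x - xs⟫)
    (g : Fin m → EuclideanSpace ℝ (Fin n) → ℝ)
    (g' : Fin m → EuclideanSpace ℝ (Fin n) → EuclideanSpace ℝ (Fin n))
    (hgconv : ∀ i, ConvexOn ℝ Set.univ (g i))
    (hg : ∀ i x, HasGradientAt (g i) (g' i x) x)
    (lam ls : EuclideanSpace ℝ (Fin m))
    (U : EuclideanSpace ℝ (Fin n) → EuclideanSpace ℝ (Fin m) → ℝ)
    (hU : ∀ x μ', U x μ' = ∑ i, ((max (ρ * g i x + μ' i) 0) ^ 2 - (μ' i) ^ 2) / (2 * ρ)) :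
    ∀ x : EuclideanSpace ℝ (Fin n),
      ⟪(f' x + ∑ i, max (ρ * g i x + lam i) 0 • g' i x) -
          (f' xs + ∑ i, max (ρ * g i xs + ls i) 0 • g' i xs), x - xs⟫ ≥
        μ * ‖x - xs‖ ^ 2 + (U x lam - U xs lam) + (U xs ls - U x ls) := by
  intro x
  have hU' : ∀ y μ', U y μ' = ∑ i, augmentedPenalty ρ (μ' i) (g i y) := hU
  have hlam : ∑ i, (augmentedPenalty ρ (lam i) (g i x) - augmentedPenalty ρ (lam i) (g i xs)) ≤
      ∑ i, max (ρ * g i x + lam i) 0 * ⟪g' i x, x - xs⟫ := by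
    refine Finset.sum_le_sum fun i _ => ?_
    have h := (hgconv i).max_zero_mul_inner_le_augmentedPenalty_sub hρ (lam i)
      (Set.mem_univ x) (Set.mem_univ xs) (hg i x)
    rw [← neg_sub x xs, inner_neg_right] at h
    linarith
  have hls : ∑ i, max (ρ * g i xs + ls i) 0 * ⟪g' i xs, x - xs⟫ ≤
      ∑ i, (augmentedPenalty ρ (ls i) (g i x) - augmentedPenalty ρ (ls i) (g i xs)) :=
    Finset.sum_le_sum fun i _ => (hgconv i).max_zero_mul_inner_le_augmentedPenalty_sub hρ (ls i)
      (Set.mem_univ xs) (Set.mem_univ x) (hg i xs)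
  have hexpand : ⟪(f' x + ∑ i, max (ρ * g i x + lam i) 0 • g' i x) -
        (f' xs + ∑ i, max (ρ * g i xs + ls i) 0 • g' i xs), x - xs⟫ =
      ⟪f' x - f' xs, x - xs⟫ + ∑ i, max (ρ * g i x + lam i) 0 * ⟪g' i x, x - xs⟫ -
        ∑ i, max (ρ * g i xs + ls i) 0 * ⟪g' i xs, x - xs⟫ := by
    simp only [inner_sub_left, inner_add_left, sum_inner, real_inner_smul_left]
    ring
  rw [Finset.sum_sub_distrib] at hlam hls
  rw [ge_iff_le, hexpand, hU', hU', hU', hU']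
  linarith [hqg x]

/-- Monotonicity-type bound for the `x`-gradient of the augmented Lagrangian:
if `f` has quadratic gradient growth at `x*` with parameter `μ > 0`, each `gᵢ`
is convex, and `λ, λ* ≥ 0`, then
`⟪∇ₓL(x,λ) − ∇ₓL(x*,λ*), x − x*⟫ ≥ μ‖x − x*‖² + (U(x,λ) − U(x*,λ)) + (U(x*,λ*) − U(x,λ*))`. -/
theorem augmented_lagrangian_gradient_monotone {n m : ℕ} (ρ : ℝ) (hρ : 0 < ρ)
    (f : EuclideanSpace ℝ (Fin n) → ℝ)
    (f' : EuclideanSpace ℝ (Fin n) → EuclideanSpace ℝ (Fin n)) (μ : ℝ) (hμ : 0 < μ)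
    (xs : EuclideanSpace ℝ (Fin n))
    (hf : ∀ x, HasGradientAt f (f' x) x)
    (hqg : ∀ x : EuclideanSpace ℝ (Fin n), μ * ‖x - xs‖ ^ 2 ≤ ⟪f' x - f' xs, x - xs⟫)
    (g : Fin m → EuclideanSpace ℝ (Fin n) → ℝ)
    (g' : Fin m → EuclideanSpace ℝ (Fin n) → EuclideanSpace ℝ (Fin n))
    (hgconv : ∀ i, ConvexOn ℝ Set.univ (g i))
    (hg : ∀ i x, HasGradientAt (g i) (g' i x) x)
    (lam ls : EuclideanSpace ℝ (Fin m))
    (hlam : ∀ i, 0 ≤ lam i) (hls : ∀ i, 0 ≤ ls i)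
    (U : EuclideanSpace ℝ (Fin n) → EuclideanSpace ℝ (Fin m) → ℝ)
    (hU : ∀ x μ', U x μ' = ∑ i, ((max (ρ * g i x + μ' i) 0) ^ 2 - (μ' i) ^ 2) / (2 * ρ)) :
    ∀ x : EuclideanSpace ℝ (Fin n),
      ⟪(f' x + ∑ i, max (ρ * g i x + lam i) 0 • g' i x) -
          (f' xs + ∑ i, max (ρ * g i xs + ls i) 0 • g' i xs), x - xs⟫ ≥
        μ * ‖x - xs‖ ^ 2 + (U x lam - U xs lam) + (U xs ls - U x ls) :=
  augmented_lagrangian_gradient_monotone_general ρ hρ f' μ xs hqg g g' hgconv hg lam ls U hU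
end

section
/- Under the hypotheses: ρ > 0, α > 0; each g_i : ℝⁿ → ℝ differentiable with ‖∇g_i(x)‖ ≤ B_{gi} for all x; and (x*, λ*) satisfying λ* ≥ 0, g(x*) ≤ 0 and λ_i* g_i(x*) = 0 for all i — the dual update λ_{k+1} = λ_k + (α/ρ)·([ρ g(x_k) + λ_k]_+ − λ_k) (componentwise) satisfies, for any x_k ∈ ℝⁿ and λ_k ∈ ℝ^m, ‖λ_{k+1} − λ*‖² ≤ (1 + 2α²/ρ²)‖λ_k − λ*‖² + 2B_g²α²‖x_k − x*‖² + 2α(U_ρ(x_k,λ_k) − U_ρ(x_k,λ*)), where B_g = sqrt(Σ_i B_{gi}²) and U_ρ(x,λ) = Σ_{i=1}^m ([ρ g_i(x)+λ_i]_+² − λ_i²)/(2ρ). -/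
/-!
With `d = [ρ g(x_k) + λ_k]₊ - λ_k = ρ ∇_λ U(x_k, λ_k)` the update reads
`λ_{k+1} - λ* = (λ_k - λ*) + (α/ρ) d`. Expanding the square, the cross term is bounded by
concavity of `U(x_k, ·)`: `⟨d, λ_k - λ*⟩ ≤ ρ (U(x_k, λ_k) - U(x_k, λ*))`. For `‖d‖²`,
complementary slackness gives `[ρ g(x*) + λ*]₊ - λ* = 0`, and `(a, l) ↦ [a + l]₊ - l = max a (-l)`
is 1-Lipschitz in each argument, so the mean value inequality yields
`|d_i| ≤ ρ B_i ‖x_k - x*‖ + |λ_{k,i} - λ*_i|`. Everything is coordinatewise: the estimate is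
proved for one coordinate and summed.
-/

open Finset

theorem norm_image_sub_le_of_norm_hasGradientAt_le {F : Type*} [NormedAddCommGroup F]
    [InnerProductSpace ℝ F] [CompleteSpace F] {f : F → ℝ} {f' : F → F} {C : ℝ}
    (hf : ∀ x, HasGradientAt f (f' x) x) (bound : ∀ x, ‖f' x‖ ≤ C) (x y : F) :
    ‖f y - f x‖ ≤ C * ‖y - x‖ :=
  convex_univ.norm_image_sub_le_of_norm_hasFDerivWithin_le
    (fun x _ => (hf x).hasFDerivAt.hasFDerivWithinAt) (fun x _ => by simpa using bound x)
    (Set.mem_univ x) (Set.mem_univ y)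

theorem max_add_zero_eq_of_complementary {a l : ℝ} (ha : a ≤ 0) (hl : 0 ≤ l) (h : l * a = 0) :
    max (a + l) 0 = l := by
  rcases hl.eq_or_lt with rfl | hl
  · simpa using ha
  · simp [(mul_eq_zero.mp h).resolve_left hl.ne', hl.le]

theorem abs_max_add_zero_sub_sub_le (a b l l' : ℝ) :
    |(max (a + l) 0 - l) - (max (b + l') 0 - l')| ≤ |a - b| + |l - l'| := by
  have hmax (a l : ℝ) : max (a + l) 0 - l = max a (-l) := by
    rw [← max_sub_sub_right, add_sub_cancel_right, zero_sub]
  rw [hmax, hmax]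
  calc _ ≤ max |a - b| |-l - -l'| := abs_max_sub_max_le_max _ _ _ _
    _ ≤ |a - b| + |l - l'| := by
      rw [neg_sub_neg, abs_sub_comm l' l]
      exact max_le_add_of_nonneg (abs_nonneg (a - b)) (abs_nonneg (l - l'))

/-- `t ↦ [c + t]₊² - t²` is concave with derivative `2 ([c + t]₊ - t)`; this is its tangent
line bound. -/
theorem sq_max_add_zero_sub_sq_le (c s t : ℝ) :
    max (c + s) 0 ^ 2 - s ^ 2 ≤ max (c + t) 0 ^ 2 - t ^ 2 + 2 * (max (c + t) 0 - t) * (s - t) := by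
  have ht : c + t ≤ max (c + t) 0 := le_max_left _ _
  have ht0 : 0 ≤ max (c + t) 0 := le_max_right _ _
  rcases le_or_gt (c + s) 0 with h | h
  · rw [max_eq_right h]
    nlinarith [sq_nonneg (max (c + t) 0 + s - t)]
  · rw [max_eq_left h.le]
    nlinarith [mul_nonneg (by linarith : 0 ≤ max (c + t) 0 + s - t + (c + s))
      (by linarith : 0 ≤ max (c + t) 0 + s - t - (c + s))]

theorem dual_step_sq_le {ρ α c l ls K : ℝ} (hρ : 0 < ρ) (hα : 0 ≤ α)
    (hK : |max (c + l) 0 - l| ≤ K + |l - ls|) :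
    (l + α / ρ * (max (c + l) 0 - l) - ls) ^ 2 ≤
      (1 + 2 * α ^ 2 / ρ ^ 2) * (l - ls) ^ 2 + 2 * α ^ 2 / ρ ^ 2 * K ^ 2 +
        2 * α * ((max (c + l) 0 ^ 2 - l ^ 2) / (2 * ρ) -
          (max (c + ls) 0 ^ 2 - ls ^ 2) / (2 * ρ)) := by
  set d := max (c + l) 0 - l
  have hd : d ^ 2 ≤ 2 * (K ^ 2 + (l - ls) ^ 2) := calc
    d ^ 2 ≤ (K + |l - ls|) ^ 2 := sq_le_sq' (abs_le.mp hK).1 (abs_le.mp hK).2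
    _ ≤ 2 * (K ^ 2 + |l - ls| ^ 2) := add_sq_le
    _ = 2 * (K ^ 2 + (l - ls) ^ 2) := by rw [sq_abs]
  have hconc := sq_max_add_zero_sub_sq_le c ls l
  have hαρ : 0 ≤ α / ρ := div_nonneg hα hρ.le
  have hscale : 2 * α * ((max (c + l) 0 ^ 2 - l ^ 2) / (2 * ρ) -
      (max (c + ls) 0 ^ 2 - ls ^ 2) / (2 * ρ)) =
      α / ρ * ((max (c + l) 0 ^ 2 - l ^ 2) - (max (c + ls) 0 ^ 2 - ls ^ 2)) := by
    field_simp
  rw [hscale]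
  calc (l + α / ρ * d - ls) ^ 2
      = (l - ls) ^ 2 + α / ρ * (2 * d * (l - ls)) + (α / ρ) ^ 2 * d ^ 2 := by ring
    _ ≤ (l - ls) ^ 2 + α / ρ * ((max (c + l) 0 ^ 2 - l ^ 2) - (max (c + ls) 0 ^ 2 - ls ^ 2))
        + (α / ρ) ^ 2 * (2 * (K ^ 2 + (l - ls) ^ 2)) := by
      gcongr
      linarith
    _ = _ := by ring

/-- One-step estimate for the dual update of Aug-PDG:
`‖λ_{k+1} − λ*‖² ≤ (1 + 2α²/ρ²)‖λ_k − λ*‖² + 2B_g²α²‖x_k − x*‖²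
  + 2α(U(x_k,λ_k) − U(x_k,λ*))`. -/
theorem augPDG_dual_step_bound {n m : ℕ} (ρ α : ℝ) (hρ : 0 < ρ) (hα : 0 < α)
    (g : Fin m → EuclideanSpace ℝ (Fin n) → ℝ)
    (g' : Fin m → EuclideanSpace ℝ (Fin n) → EuclideanSpace ℝ (Fin n))
    (B : Fin m → ℝ)
    (hg : ∀ i x, HasGradientAt (g i) (g' i x) x)
    (hgB : ∀ i x, ‖g' i x‖ ≤ B i)
    (xs : EuclideanSpace ℝ (Fin n)) (ls : EuclideanSpace ℝ (Fin m))
    (hls : ∀ i, 0 ≤ ls i) (hgs : ∀ i, g i xs ≤ 0) (hcomp : ∀ i, ls i * g i xs = 0)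
    (Bg : ℝ) (hBg : Bg = Real.sqrt (∑ i, (B i) ^ 2))
    (U : EuclideanSpace ℝ (Fin n) → EuclideanSpace ℝ (Fin m) → ℝ)
    (hU : ∀ x μ', U x μ' = ∑ i, ((max (ρ * g i x + μ' i) 0) ^ 2 - (μ' i) ^ 2) / (2 * ρ))
    (xk : EuclideanSpace ℝ (Fin n)) (lamk lamk1 : EuclideanSpace ℝ (Fin m))
    (hupd : ∀ i, lamk1 i = lamk i + (α / ρ) * (max (ρ * g i xk + lamk i) 0 - lamk i)) :
    ‖lamk1 - ls‖ ^ 2 ≤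
      (1 + 2 * α ^ 2 / ρ ^ 2) * ‖lamk - ls‖ ^ 2 + 2 * Bg ^ 2 * α ^ 2 * ‖xk - xs‖ ^ 2 +
        2 * α * (U xk lamk - U xk ls) := by
  set N := ‖xk - xs‖
  have hresidual (i : Fin m) :
      |max (ρ * g i xk + lamk i) 0 - lamk i| ≤ ρ * (B i * N) + |lamk i - ls i| := by
    have hkkt : max (ρ * g i xs + ls i) 0 - ls i = 0 := by
      rw [max_add_zero_eq_of_complementary (mul_nonpos_of_nonneg_of_nonpos hρ.le (hgs i)) (hls i)
        (by rw [mul_left_comm, hcomp i, mul_zero]), sub_self]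
    have hlip : ‖g i xk - g i xs‖ ≤ B i * N :=
      norm_image_sub_le_of_norm_hasGradientAt_le (hg i) (hgB i) xs xk
    calc |max (ρ * g i xk + lamk i) 0 - lamk i|
        = |(max (ρ * g i xk + lamk i) 0 - lamk i) - (max (ρ * g i xs + ls i) 0 - ls i)| := by
          rw [hkkt, sub_zero]
      _ ≤ |ρ * g i xk - ρ * g i xs| + |lamk i - ls i| := abs_max_add_zero_sub_sub_le _ _ _ _
      _ ≤ ρ * (B i * N) + |lamk i - ls i| := by
        rw [← mul_sub, abs_mul, abs_of_pos hρ, ← Real.norm_eq_abs]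
        gcongr
  have hcoord (i : Fin m) : (lamk1 i - ls i) ^ 2 ≤
      (1 + 2 * α ^ 2 / ρ ^ 2) * (lamk i - ls i) ^ 2 + 2 * B i ^ 2 * α ^ 2 * N ^ 2 +
        2 * α * ((max (ρ * g i xk + lamk i) 0 ^ 2 - lamk i ^ 2) / (2 * ρ) -
          (max (ρ * g i xk + ls i) 0 ^ 2 - ls i ^ 2) / (2 * ρ)) := by
    rw [hupd i]
    convert dual_step_sq_le hρ hα.le (hresidual i) using 3
    field_simp
  calc ‖lamk1 - ls‖ ^ 2 = ∑ i, (lamk1 i - ls i) ^ 2 :=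
        EuclideanSpace.real_norm_sq_eq _
    _ ≤ _ := sum_le_sum fun i _ => hcoord i
    _ = _ := by
      rw [hU, hU, hBg, Real.sq_sqrt (by positivity), EuclideanSpace.real_norm_sq_eq (lamk - ls)]
      simp only [PiLp.sub_apply, mul_sum, sum_mul, ← sum_sub_distrib, ← sum_add_distrib]
end
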